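/- Let x_1, ..., x_N be pairwise distinct points in Euclidean space R^d. Then Σ_{i=1}^N Σ_{j=1}^N Σ_{k ≠ i} (x_i - x_j) · (x_i - x_k) / |x_i - x_k|² = N²(N-1)/2. (This is the key algebraic identity, coming from the logarithmic interaction kernel ∇ln|x| = x/|x|², that makes the evolution equation for the radius R_t of the interacting particle system a closed equation.) -/

import Mathlib

open Finset

/-! The weight `⟪a - c, a - b⟫ / ‖a - b‖²` of the ordered pair `(a, b)` and that of `(b, a)`
add up to `1` whatever the reference point `c`, so for each `j` the `N (N - 1)` ordered pairs
`i ≠ k` contribute `N (N - 1) / 2`, and summing over `j` gives `N² (N - 1) / 2`. -/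

theorem inner_sub_div_norm_sq_add_swap {E : Type*} [NormedAddCommGroup E] [InnerProductSpace ℝ E]
    {a b : E} (hab : a ≠ b) (c : E) :
    inner ℝ (a - c) (a - b) / ‖a - b‖ ^ 2 + inner ℝ (b - c) (b - a) / ‖b - a‖ ^ 2 = 1 := by
  have hnorm : ‖a - b‖ ^ 2 ≠ 0 := pow_ne_zero _ (norm_ne_zero_iff.2 (sub_ne_zero.2 hab))
  have hsum : inner ℝ (a - c) (a - b) + inner ℝ (b - c) (b - a) = ‖a - b‖ ^ 2 := by
    rw [← neg_sub a b, inner_neg_right, ← sub_eq_add_neg, ← inner_sub_left,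
      sub_sub_sub_cancel_right, real_inner_self_eq_norm_sq]
  rw [norm_sub_rev b a, ← add_div, hsum, div_self hnorm]

theorem two_mul_sum_sum_ne_eq_of_add_swap_eq_one {ι R : Type*} [Fintype ι] [DecidableEq ι]
    [CommRing R] (f : ι → ι → R) (hf : ∀ i k, k ≠ i → f i k + f k i = 1) :
    2 * ∑ i, ∑ k ∈ univ.filter (· ≠ i), f i k
      = Fintype.card ι * (Fintype.card ι - 1) := by
  have hswap : ∑ i, ∑ k ∈ univ.filter (· ≠ i), f i k
      = ∑ i, ∑ k ∈ univ.filter (· ≠ i), f k i :=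
    sum_comm' fun i k => by simp only [mem_filter, mem_univ, true_and, and_true, ne_comm]
  calc 2 * ∑ i, ∑ k ∈ univ.filter (· ≠ i), f i k
      = ∑ i, ∑ k ∈ univ.filter (· ≠ i), (f i k + f k i) := by
        rw [two_mul]
        nth_rewrite 2 [hswap]
        simp only [← sum_add_distrib]
    _ = ∑ i : ι, ((univ.erase i).card : R) := by
        refine sum_congr rfl fun i _ => ?_
        rw [sum_congr rfl fun k hk => hf i k (mem_filter.1 hk).2, sum_const, filter_ne',
          nsmul_one]
    _ = Fintype.card ι * (Fintype.card ι - 1) := by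
        simp only [cast_card_erase_of_mem (mem_univ _), sum_const, card_univ, nsmul_eq_mul]

/-- For pairwise distinct points `x 1, ..., x N` in Euclidean space `ℝ^d`,
`∑ i, ∑ j, ∑_{k ≠ i} (x i - x j) · (x i - x k) / ‖x i - x k‖² = N²(N-1)/2`.
This identity, coming from the logarithmic interaction kernel `∇ ln|x| = x/|x|²`, makes the
evolution equation for the radius of the interacting particle system a closed equation. -/
theorem log_kernel_radius_identity (d N : ℕ) (x : Fin N → EuclideanSpace ℝ (Fin d))
    (hx : Function.Injective x) :
    ∑ i, ∑ j, ∑ k ∈ univ.filter (· ≠ i),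
        (inner ℝ (x i - x j) (x i - x k) : ℝ) / ‖x i - x k‖ ^ 2
      = (N : ℝ) ^ 2 * ((N : ℝ) - 1) / 2 := by
  have hpair : ∀ j : Fin N, 2 * ∑ i, ∑ k ∈ univ.filter (· ≠ i),
      (inner ℝ (x i - x j) (x i - x k) : ℝ) / ‖x i - x k‖ ^ 2 = N * (N - 1) := fun j => by
    simpa using two_mul_sum_sum_ne_eq_of_add_swap_eq_one _
      fun i k hki => inner_sub_div_norm_sq_add_swap (hx.ne hki.symm) (x j)
  rw [sum_comm, eq_div_iff two_ne_zero, sum_mul]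
  simp only [mul_comm _ (2 : ℝ), hpair, sum_const, card_univ, Fintype.card_fin, nsmul_eq_mul]
  ring
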